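/- For the stochastic apportionment scheme, the marginal distribution of A_i depends only on q_i: P(A_i = ⌊q_i⌋ + 1) = q_i − ⌊q_i⌋ and P(A_i = ⌊q_i⌋) = 1 − (q_i − ⌊q_i⌋). Consequently, if q and q̃ are two quota vectors (each summing to an integer house size) with q_i ≤ q̃_i for some state i, then A^q_i is stochastically dominated by A^{q̃}_i. -/

import Mathlib

/-!
The `i`-th state is rounded up exactly when the window `[u + S, u + S + f)`, with
`S = ∑_{j<i} frac q_j` and `f = frac q_i`, contains an integer. As a set of shifts `u` this is
invariant under integer translation, so its measure within `[0, 1)` equals its measure within any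
other period; on the period `(⌈S⌉ - S - 1, ⌈S⌉ - S]` the window contains an integer iff
`u > ⌈S⌉ - S - f`, an interval of length `f`. Hence `A_i = ⌊q_i⌋ + Bernoulli(frac q_i)`, whose tail
`P(A_i ≥ k) = min 1 (q_i + 1 - k)` is monotone in `q_i`.
-/

open MeasureTheory Classical

/-- The allocation of the Section-3 stochastic scheme with quotas `q` and
shift `u`. -/
noncomputable def stochAlloc (q : ℕ → ℝ) (i : ℕ) (u : ℝ) : ℤ :=
  ⌊q i⌋ +
    (if ∃ n : ℤ, u + ∑ j ∈ Finset.range i, (q j - ⌊q j⌋) ≤ (n : ℝ) ∧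
          (n : ℝ) < u + ∑ j ∈ Finset.range (i + 1), (q j - ⌊q j⌋)
      then 1 else 0)

open Set

lemma exists_int_mem_Ico_iff_ceil_lt (x f : ℝ) :
    (∃ n : ℤ, x ≤ n ∧ (n : ℝ) < x + f) ↔ (⌈x⌉ : ℝ) < x + f :=
  ⟨fun ⟨_, hxn, hn⟩ => (Int.cast_le.2 (Int.ceil_le.2 hxn)).trans_lt hn,
    fun h => ⟨⌈x⌉, Int.le_ceil x, h⟩⟩

-- `⌈u + S⌉` is the least integer `≥ u + S`, so this says `[u + S, u + S + f)` contains an integer.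
def intHitSet (S f : ℝ) : Set ℝ := {u | (⌈u + S⌉ : ℝ) < u + S + f}

section IntHitSet

variable {S f : ℝ}

lemma measurableSet_intHitSet : MeasurableSet (intHitSet S f) :=
  measurableSet_lt (measurable_from_top.comp (Int.measurable_ceil.comp (measurable_add_const S)))
    (by fun_prop)

lemma intCast_add_mem_intHitSet_iff (m : ℤ) (u : ℝ) :
    (m : ℝ) + u ∈ intHitSet S f ↔ u ∈ intHitSet S f := by
  simp only [intHitSet, mem_ofPred_eq, add_assoc, Int.ceil_intCast_add, Int.cast_add]
  constructor <;> intro h <;> linarith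

lemma intHitSet_inter_Ioc (hf : f ≤ 1) :
    intHitSet S f ∩ Ioc (⌈S⌉ - S - 1) (⌈S⌉ - S) = Ioc (⌈S⌉ - S - f) (⌈S⌉ - S) := by
  ext u
  simp only [intHitSet, mem_inter_iff, mem_ofPred_eq, mem_Ioc]
  constructor
  · rintro ⟨hu, hau, hua⟩
    have hceil : ⌈u + S⌉ = ⌈S⌉ := Int.ceil_eq_iff.2 ⟨by linarith, by linarith⟩
    rw [hceil] at hu
    exact ⟨by linarith, hua⟩
  · rintro ⟨hfu, hua⟩
    have hceil : ⌈u + S⌉ = ⌈S⌉ := Int.ceil_eq_iff.2 ⟨by linarith, by linarith⟩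
    rw [hceil]
    exact ⟨by linarith, by linarith, hua⟩

lemma volume_intHitSet_inter_Ico (hf : f ≤ 1) :
    volume (intHitSet S f ∩ Ico 0 1) = ENNReal.ofReal f := by
  have hinv : ∀ g : AddSubgroup.zmultiples (1 : ℝ),
      (fun x => g +ᵥ x) ⁻¹' intHitSet S f = intHitSet S f := by
    rintro ⟨_, m, rfl⟩
    ext u
    simpa using intCast_add_mem_intHitSet_iff m u
  calc volume (intHitSet S f ∩ Ico 0 1)
      = volume (intHitSet S f ∩ Ioc 0 (0 + 1)) := by
        rw [zero_add]; exact measure_congr (ae_eq_refl _ |>.inter Ico_ae_eq_Ioc)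
    _ = volume (intHitSet S f ∩ Ioc (⌈S⌉ - S - 1) (⌈S⌉ - S - 1 + 1)) :=
        (isAddFundamentalDomain_Ioc one_pos 0).measure_set_eq
          (isAddFundamentalDomain_Ioc one_pos _) measurableSet_intHitSet hinv
    _ = ENNReal.ofReal f := by
        rw [sub_add_cancel, intHitSet_inter_Ioc hf, Real.volume_Ioc, sub_sub_cancel]

end IntHitSet

noncomputable def roundUpOn (A : Set ℝ) (x u : ℝ) : ℤ := ⌊x⌋ + if u ∈ A then 1 else 0

section RoundUpOn

variable {A : Set ℝ} {x : ℝ}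

lemma setOf_roundUpOn_eq_floor_add_one :
    {u | u ∈ Ico (0 : ℝ) 1 ∧ roundUpOn A x u = ⌊x⌋ + 1} = A ∩ Ico 0 1 := by
  ext u
  by_cases hu : u ∈ A <;> simp [roundUpOn, hu]

lemma setOf_roundUpOn_eq_floor :
    {u | u ∈ Ico (0 : ℝ) 1 ∧ roundUpOn A x u = ⌊x⌋} = Ico 0 1 \ A := by
  ext u
  by_cases hu : u ∈ A <;> simp [roundUpOn, hu]

lemma volume_setOf_roundUpOn_eq_floor (hA : MeasurableSet A)
    (hAx : volume (A ∩ Ico 0 1) = ENNReal.ofReal (Int.fract x)) :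
    volume {u | u ∈ Ico (0 : ℝ) 1 ∧ roundUpOn A x u = ⌊x⌋} =
      ENNReal.ofReal (1 - Int.fract x) := by
  rw [setOf_roundUpOn_eq_floor, ← sdiff_inter_self_eq_sdiff,
    measure_sdiff inter_subset_right (hA.inter measurableSet_Ico).nullMeasurableSet
      (by simp [hAx]),
    hAx, Real.volume_Ico, sub_zero, ENNReal.ofReal_sub _ (Int.fract_nonneg x)]

lemma volume_setOf_le_roundUpOn (hAx : volume (A ∩ Ico 0 1) = ENNReal.ofReal (Int.fract x))
    (k : ℤ) :
    volume {u | u ∈ Ico (0 : ℝ) 1 ∧ k ≤ roundUpOn A x u} =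
      min 1 (ENNReal.ofReal (x + 1 - k)) := by
  have hround : ∀ u, ⌊x⌋ ≤ roundUpOn A x u ∧ roundUpOn A x u ≤ ⌊x⌋ + 1 := fun u => by
    unfold roundUpOn; split_ifs <;> omega
  have hfloor_le := Int.floor_le x
  have hlt_floor := Int.lt_floor_add_one x
  obtain hk | rfl | hk : k ≤ ⌊x⌋ ∨ k = ⌊x⌋ + 1 ∨ ⌊x⌋ + 2 ≤ k := by omega
  · have hset : {u | u ∈ Ico (0 : ℝ) 1 ∧ k ≤ roundUpOn A x u} = Ico 0 1 := by
      ext u; simpa using fun _ _ => hk.trans (hround u).1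
    have hk' : (k : ℝ) ≤ ⌊x⌋ := by exact_mod_cast hk
    rw [hset, Real.volume_Ico, sub_zero, ENNReal.ofReal_one,
      min_eq_left (ENNReal.one_le_ofReal.2 (by linarith))]
  · have hset : {u | u ∈ Ico (0 : ℝ) 1 ∧ ⌊x⌋ + 1 ≤ roundUpOn A x u} =
        {u | u ∈ Ico (0 : ℝ) 1 ∧ roundUpOn A x u = ⌊x⌋ + 1} := by
      ext u
      exact and_congr_right fun _ => ⟨fun h => le_antisymm (hround u).2 h, ge_of_eq⟩
    have hfract : x + 1 - ((⌊x⌋ + 1 : ℤ) : ℝ) = Int.fract x := by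
      rw [← Int.self_sub_floor]; push_cast; ring
    rw [hset, setOf_roundUpOn_eq_floor_add_one, hAx, hfract,
      min_eq_right (ENNReal.ofReal_le_one.2 (Int.fract_lt_one x).le)]
  · have hset : {u | u ∈ Ico (0 : ℝ) 1 ∧ k ≤ roundUpOn A x u} = ∅ := by
      ext u; simpa using fun _ _ => (hround u).2.trans_lt (by omega)
    have hk' : ((⌊x⌋ + 2 : ℤ) : ℝ) ≤ k := by exact_mod_cast hk
    push_cast at hk'
    rw [hset, measure_empty, ENNReal.ofReal_eq_zero.2 (by linarith), min_eq_right zero_le_one]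

end RoundUpOn

lemma stochAlloc_eq_roundUpOn (q : ℕ → ℝ) (i : ℕ) :
    stochAlloc q i =
      roundUpOn (intHitSet (∑ j ∈ Finset.range i, Int.fract (q j)) (Int.fract (q i))) (q i) := by
  ext u
  simp only [stochAlloc, roundUpOn, intHitSet, Finset.sum_range_succ, mem_ofPred_eq,
    Int.self_sub_floor, ← add_assoc, exists_int_mem_Ico_iff_ceil_lt]
  congr

theorem stmt_17_general (q q' : ℕ → ℝ) (i : ℕ) :
    (volume {u : ℝ | u ∈ Set.Ico (0 : ℝ) 1 ∧ stochAlloc q i u = ⌊q i⌋ + 1}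
        = ENNReal.ofReal (q i - ⌊q i⌋) ∧
      volume {u : ℝ | u ∈ Set.Ico (0 : ℝ) 1 ∧ stochAlloc q i u = ⌊q i⌋}
        = ENNReal.ofReal (1 - (q i - ⌊q i⌋))) ∧
    (q i ≤ q' i →
      ∀ k : ℤ,
        volume {u : ℝ | u ∈ Set.Ico (0 : ℝ) 1 ∧ k ≤ stochAlloc q i u} ≤
          volume {u : ℝ | u ∈ Set.Ico (0 : ℝ) 1 ∧ k ≤ stochAlloc q' i u}) := by
  have hvol : ∀ p : ℕ → ℝ,
      volume (intHitSet (∑ j ∈ Finset.range i, Int.fract (p j)) (Int.fract (p i)) ∩ Ico 0 1) =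
        ENNReal.ofReal (Int.fract (p i)) :=
    fun p => volume_intHitSet_inter_Ico (Int.fract_lt_one _).le
  simp only [stochAlloc_eq_roundUpOn, Int.self_sub_floor]
  refine ⟨⟨?_, volume_setOf_roundUpOn_eq_floor measurableSet_intHitSet (hvol q)⟩,
    fun hle k => ?_⟩
  · rw [setOf_roundUpOn_eq_floor_add_one, hvol]
  · rw [volume_setOf_le_roundUpOn (hvol q), volume_setOf_le_roundUpOn (hvol q')]
    gcongr

/-- The marginal law of `A i` depends only on `q i`:
`P(A i = ⌊q i⌋ + 1) = frac (q i)` and `P(A i = ⌊q i⌋) = 1 - frac (q i)`;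
consequently, if `q i ≤ q̃ i` then `A^q i` is stochastically dominated by
`A^q̃ i`. -/
theorem stmt_17 (s r r' : ℕ) (q q' : ℕ → ℝ)
    (hq : ∀ k < s, 0 ≤ q k) (hq' : ∀ k < s, 0 ≤ q' k)
    (hqsum : ∑ k ∈ Finset.range s, q k = r)
    (hq'sum : ∑ k ∈ Finset.range s, q' k = r')
    (i : ℕ) (hi : i < s) :
    (volume {u : ℝ | u ∈ Set.Ico (0 : ℝ) 1 ∧ stochAlloc q i u = ⌊q i⌋ + 1}
        = ENNReal.ofReal (q i - ⌊q i⌋) ∧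
      volume {u : ℝ | u ∈ Set.Ico (0 : ℝ) 1 ∧ stochAlloc q i u = ⌊q i⌋}
        = ENNReal.ofReal (1 - (q i - ⌊q i⌋))) ∧
    (q i ≤ q' i →
      ∀ k : ℤ,
        volume {u : ℝ | u ∈ Set.Ico (0 : ℝ) 1 ∧ k ≤ stochAlloc q i u} ≤
          volume {u : ℝ | u ∈ Set.Ico (0 : ℝ) 1 ∧ k ≤ stochAlloc q' i u}) :=
  stmt_17_general q q' i
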